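/- Let Δ > 0 and p ≥ 0. Let X be a real random variable with E[X²] ≤ p, and let U be uniformly distributed on [−Δ/2, Δ/2] and independent of X. Let f be the density of Y = X + U, and assume f · log₂ f is Lebesgue integrable (with 0·log 0 = 0). Then the differential entropy of Y satisfies −∫_ℝ f(y) log₂ f(y) dy < (1/2)·log₂( 2πe·(Δ²/12 + p) ). -/

import Mathlib

open MeasureTheory ProbabilityTheory Real

/-- The uniform probability measure on the interval `[-Δ/2, Δ/2]`. -/
noncomputable def uniformDitherMeasure (Δ : ℝ) : Measure ℝ :=
  (ENNReal.ofReal Δ)⁻¹ • volume.restrict (Set.Icc (-(Δ / 2)) (Δ / 2))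

/-!
Among densities with second moment at most `v`, Gibbs' inequality against the centred Gaussian
density `g` gives `-∫ f log f ≤ -∫ f log g ≤ ½ log (2πe v)`, and the first inequality is strict
unless `f = g` almost everywhere. The law of `X + U` is not Gaussian: its characteristic function
is the product of those of `X` and `U`, and the one of `U` vanishes at `2π/Δ`, whereas a Gaussian
characteristic function has no zeros.
-/

open InformationTheory
open scoped ENNReal NNReal

section WithDensity

variable {α : Type*} [MeasurableSpace α] {μ : Measure α} {f : α → ℝ}

lemma integral_withDensity_ofReal (hf : Measurable f) (hf0 : ∀ x, 0 ≤ f x) (h : α → ℝ) :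
    ∫ x, h x ∂μ.withDensity (fun x ↦ ENNReal.ofReal (f x)) = ∫ x, f x * h x ∂μ := by
  rw [integral_withDensity_eq_integral_toReal_smul hf.ennreal_ofReal
    (ae_of_all _ fun _ ↦ ENNReal.ofReal_lt_top)]
  simp_rw [ENNReal.toReal_ofReal (hf0 _), smul_eq_mul]

lemma integrable_withDensity_ofReal_iff (hf : Measurable f) (hf0 : ∀ x, 0 ≤ f x) {h : α → ℝ} :
    Integrable h (μ.withDensity fun x ↦ ENNReal.ofReal (f x))
      ↔ Integrable (fun x ↦ f x * h x) μ := by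
  rw [integrable_withDensity_iff hf.ennreal_ofReal (ae_of_all _ fun _ ↦ ENNReal.ofReal_lt_top)]
  simp_rw [ENNReal.toReal_ofReal (hf0 _), mul_comm]

end WithDensity

lemma mul_log_sub_mul_log_sub_add_eq_mul_klFun (a : ℝ) {b : ℝ} (hb : 0 < b) :
    a * log a - a * log b - a + b = b * klFun (a / b) := by
  rcases eq_or_ne a 0 with rfl | ha
  · simp [klFun_zero]
  · rw [klFun_apply, log_div ha hb.ne']
    field_simp
    ring

section Gibbs

variable {α : Type*} [MeasurableSpace α] {μ : Measure α} {f g : α → ℝ}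

theorem integral_mul_log_lt_integral_mul_log (hf0 : ∀ x, 0 ≤ f x) (hg : ∀ x, 0 < g x)
    (hfi : Integrable f μ) (hgi : Integrable g μ) (hgf : ∫ x, g x ∂μ ≤ ∫ x, f x ∂μ)
    (hflogf : Integrable (fun x ↦ f x * log (f x)) μ)
    (hflogg : Integrable (fun x ↦ f x * log (g x)) μ) (hne : ¬ f =ᵐ[μ] g) :
    ∫ x, f x * log (g x) ∂μ < ∫ x, f x * log (f x) ∂μ := by
  set φ : α → ℝ := fun x ↦ f x * log (f x) - f x * log (g x) - f x + g x
  have hφ : φ = fun x ↦ g x * klFun (f x / g x) :=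
    funext fun x ↦ mul_log_sub_mul_log_sub_add_eq_mul_klFun _ (hg x)
  have hφ0 : 0 ≤ φ := fun x ↦
    hφ ▸ mul_nonneg (hg x).le (klFun_nonneg (div_nonneg (hf0 x) (hg x).le))
  have hφi : Integrable φ μ := ((hflogf.sub hflogg).sub hfi).add hgi
  have hφpos : 0 < ∫ x, φ x ∂μ := by
    refine (integral_nonneg hφ0).lt_of_ne fun h ↦ hne ?_
    filter_upwards [(integral_eq_zero_iff_of_nonneg hφ0 hφi).mp h.symm] with x hx
    rw [hφ] at hx
    have hkl := (mul_eq_zero.mp hx).resolve_left (hg x).ne'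
    rw [klFun_eq_zero_iff (div_nonneg (hf0 x) (hg x).le), div_eq_one_iff_eq (hg x).ne'] at hkl
    exact hkl
  have hφint : ∫ x, φ x ∂μ = ∫ x, f x * log (f x) ∂μ - ∫ x, f x * log (g x) ∂μ
      - ∫ x, f x ∂μ + ∫ x, g x ∂μ := by
    simp only [φ]
    rw [integral_add (f := fun x ↦ f x * log (f x) - f x * log (g x) - f x)
      ((hflogf.sub hflogg).sub hfi) hgi,
      integral_sub (f := fun x ↦ f x * log (f x) - f x * log (g x)) (hflogf.sub hflogg) hfi,
      integral_sub hflogf hflogg]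
  linarith

end Gibbs

lemma log_gaussianPDFReal (m : ℝ) (v : ℝ≥0) (x : ℝ) :
    log (gaussianPDFReal m v x) = -(1 / 2) * log (2 * π * v) - (x - m) ^ 2 / (2 * v) := by
  rcases eq_or_ne v 0 with rfl | hv
  · simp
  have : 0 < 2 * π * v := by positivity
  rw [gaussianPDFReal, log_mul (by positivity) (exp_ne_zero _), log_inv, log_sqrt this.le, log_exp]
  ring

theorem neg_integral_mul_log_lt_of_not_ae_eq_gaussianPDFReal {f : ℝ → ℝ} (hf0 : ∀ y, 0 ≤ f y)
    (hfi : Integrable f) (hf1 : ∫ y, f y = 1) {v : ℝ≥0} (hv : v ≠ 0)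
    (hf2i : Integrable fun y ↦ f y * y ^ 2) (hf2 : ∫ y, f y * y ^ 2 ≤ v)
    (hflogf : Integrable fun y ↦ f y * log (f y)) (hne : ¬ f =ᵐ[volume] gaussianPDFReal 0 v) :
    -∫ y, f y * log (f y) < 1 / 2 * log (2 * π * rexp 1 * v) := by
  have hv0 : (0 : ℝ) < v := by positivity
  have hlog : ∀ y, f y * log (gaussianPDFReal 0 v y)
      = -(1 / 2) * log (2 * π * v) * f y - (2 * (v : ℝ))⁻¹ * (f y * y ^ 2) := fun y ↦ by
    rw [log_gaussianPDFReal]; ring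
  have hflogg : Integrable fun y ↦ f y * log (gaussianPDFReal 0 v y) := by
    simp_rw [hlog]; exact (hfi.const_mul _).sub (hf2i.const_mul _)
  have hcross : ∫ y, f y * log (gaussianPDFReal 0 v y)
      = -(1 / 2) * log (2 * π * v) - (2 * (v : ℝ))⁻¹ * ∫ y, f y * y ^ 2 := by
    simp_rw [hlog]
    rw [integral_sub (hfi.const_mul _) (hf2i.const_mul _), integral_const_mul, integral_const_mul,
      hf1, mul_one]
  have hgibbs := integral_mul_log_lt_integral_mul_log hf0 (fun y ↦ gaussianPDFReal_pos 0 v y hv)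
    hfi (integrable_gaussianPDFReal 0 v) (by rw [hf1, integral_gaussianPDFReal_eq_one 0 hv])
    hflogf hflogg hne
  have hmom : (2 * (v : ℝ))⁻¹ * ∫ y, f y * y ^ 2 ≤ 1 / 2 := by
    rw [inv_mul_le_iff₀ (by positivity)]; linarith
  have hlogE : log (2 * π * rexp 1 * v) = log (2 * π * v) + 1 := by
    rw [mul_right_comm, log_mul (by positivity) (exp_ne_zero 1), log_exp]
  linarith

theorem neg_integral_mul_log_lt_of_withDensity_ne_gaussianReal {f : ℝ → ℝ} (hf : Measurable f)
    (hf0 : ∀ y, 0 ≤ f y)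
    [IsProbabilityMeasure (volume.withDensity fun y ↦ ENNReal.ofReal (f y))] {v : ℝ≥0}
    (hv : v ≠ 0)
    (h2i : Integrable (fun y ↦ y ^ 2) (volume.withDensity fun y ↦ ENNReal.ofReal (f y)))
    (h2 : ∫ y, y ^ 2 ∂volume.withDensity (fun y ↦ ENNReal.ofReal (f y)) ≤ v)
    (hne : volume.withDensity (fun y ↦ ENNReal.ofReal (f y)) ≠ gaussianReal 0 v)
    (hflogf : Integrable fun y ↦ f y * log (f y)) :
    -∫ y, f y * log (f y) < 1 / 2 * log (2 * π * rexp 1 * v) := by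
  have hfi : Integrable f := by
    simpa using (integrable_withDensity_ofReal_iff hf hf0).mp (integrable_const (1 : ℝ))
  have hf1 : ∫ y, f y = 1 := by
    simpa using (integral_withDensity_ofReal (μ := volume) hf hf0 fun _ ↦ (1 : ℝ)).symm
  refine neg_integral_mul_log_lt_of_not_ae_eq_gaussianPDFReal hf0 hfi hf1 hv
    ((integrable_withDensity_ofReal_iff hf hf0).mp h2i)
    (integral_withDensity_ofReal hf hf0 (· ^ 2) ▸ h2) hflogf fun h ↦ hne ?_
  rw [gaussianReal_of_var_ne_zero 0 hv]
  exact withDensity_congr_ae (h.fun_comp ENNReal.ofReal)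

section Uniform

variable {Δ : ℝ}

lemma integral_uniformDitherMeasure {E : Type*} [NormedAddCommGroup E] [NormedSpace ℝ E]
    (hΔ : 0 < Δ) (h : ℝ → E) :
    ∫ u, h u ∂uniformDitherMeasure Δ = Δ⁻¹ • ∫ u in -(Δ / 2)..Δ / 2, h u := by
  rw [uniformDitherMeasure, integral_smul_measure, intervalIntegral.integral_of_le (by linarith),
    ← integral_Icc_eq_integral_Ioc, ENNReal.toReal_inv, ENNReal.toReal_ofReal hΔ.le]

lemma integral_id_uniformDitherMeasure (hΔ : 0 < Δ) : ∫ u, u ∂uniformDitherMeasure Δ = 0 := by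
  rw [integral_uniformDitherMeasure hΔ, integral_id]
  ring

lemma integral_sq_uniformDitherMeasure (hΔ : 0 < Δ) :
    ∫ u, u ^ 2 ∂uniformDitherMeasure Δ = Δ ^ 2 / 12 := by
  rw [integral_uniformDitherMeasure hΔ, integral_pow, smul_eq_mul]
  field_simp
  ring

lemma ae_mem_Icc_uniformDitherMeasure :
    ∀ᵐ u ∂uniformDitherMeasure Δ, u ∈ Set.Icc (-(Δ / 2)) (Δ / 2) :=
  Measure.ae_smul_measure (ae_restrict_mem measurableSet_Icc) _

lemma charFun_uniformDitherMeasure_two_pi_div (hΔ : 0 < Δ) :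
    charFun (uniformDitherMeasure Δ) (2 * π / Δ) = 0 := by
  set c : ℂ := Complex.I * ((2 * π / Δ : ℝ) : ℂ)
  have hc : c ≠ 0 := by simp [c, hΔ.ne', pi_ne_zero]
  have hΔ' : (Δ : ℂ) ≠ 0 := by exact_mod_cast hΔ.ne'
  have hright : c * ((Δ / 2 : ℝ) : ℂ) = π * Complex.I := by
    simp only [c]; push_cast; field_simp
  have hleft : c * ((-(Δ / 2) : ℝ) : ℂ) = -(π * Complex.I) := by
    simp only [c]; push_cast; field_simp
  simp_rw [charFun_apply_real, integral_uniformDitherMeasure hΔ, mul_comm _ Complex.I, ← mul_assoc]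
  rw [integral_exp_mul_complex hc, hright, hleft, Complex.exp_neg, Complex.exp_pi_mul_I]
  norm_num

end Uniform

section Independent

variable {Ω : Type*} [MeasurableSpace Ω] {P : Measure Ω} {X U : Ω → ℝ}

lemma ProbabilityTheory.IndepFun.integral_add_sq [IsFiniteMeasure P] (hXU : IndepFun X U P)
    (hX : MemLp X 2 P) (hU : MemLp U 2 P) (hU0 : ∫ ω, U ω ∂P = 0) :
    ∫ ω, (X ω + U ω) ^ 2 ∂P = ∫ ω, X ω ^ 2 ∂P + ∫ ω, U ω ^ 2 ∂P := by
  have hXUi : Integrable (fun ω ↦ 2 * (X ω * U ω)) P :=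
    (hXU.integrable_mul (hX.integrable one_le_two) (hU.integrable one_le_two)).const_mul 2
  have hXUint : ∫ ω, X ω * U ω ∂P = 0 := by
    rw [← Pi.mul_def (f := X), hXU.integral_mul_eq_mul_integral
      (hX.aestronglyMeasurable) (hU.aestronglyMeasurable), hU0, mul_zero]
  simp_rw [add_sq', mul_assoc]
  rw [integral_add (f := fun ω ↦ X ω ^ 2 + U ω ^ 2) (hX.integrable_sq.add hU.integrable_sq) hXUi,
    integral_add hX.integrable_sq hU.integrable_sq, integral_const_mul, hXUint, mul_zero,
    add_zero]

lemma map_add_ne_gaussianReal [IsProbabilityMeasure P] {Δ : ℝ} (hΔ : 0 < Δ)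
    (hX : AEMeasurable X P) (hU : AEMeasurable U P) (hXU : IndepFun X U P)
    (hunif : P.map U = uniformDitherMeasure Δ) (m : ℝ) (v : ℝ≥0) :
    P.map (fun ω ↦ X ω + U ω) ≠ gaussianReal m v := by
  intro h
  have := congrFun (hXU.charFun_map_fun_add_eq_mul hX hU) (2 * π / Δ)
  rw [h, charFun_gaussianReal, Pi.mul_apply, hunif, charFun_uniformDitherMeasure_two_pi_div hΔ,
    mul_zero] at this
  exact Complex.exp_ne_zero _ this

end Independent

/-- Strict maximum-entropy bound: if `E[X²] ≤ p`, `U` is uniform on `[-Δ/2, Δ/2]` and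
independent of `X`, and `f` is the density of `Y = X + U` with `f · log₂ f` integrable,
then the differential entropy of `Y` satisfies
`−∫ f log₂ f < (1/2)·log₂(2πe·(Δ²/12 + p))`. -/
theorem stmt_9 {Ω : Type*} [MeasurableSpace Ω] (P : Measure Ω) [IsProbabilityMeasure P]
    (Δ p : ℝ) (hΔ : 0 < Δ) (hp : 0 ≤ p)
    (X U : Ω → ℝ) (hX : Measurable X) (hU : Measurable U)
    (hX2 : Integrable (fun ω => X ω ^ 2) P)
    (hmom : ∫ ω, X ω ^ 2 ∂P ≤ p)
    (hindep : IndepFun X U P)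
    (hunif : Measure.map U P = uniformDitherMeasure Δ)
    (f : ℝ → ℝ) (hf : Measurable f) (hf0 : ∀ y, 0 ≤ f y)
    (hdens : Measure.map (fun ω => X ω + U ω) P
      = volume.withDensity fun y => ENNReal.ofReal (f y))
    (hint : Integrable (fun y => f y * logb 2 (f y)) volume) :
    - ∫ y, f y * logb 2 (f y)
      < (1 / 2 : ℝ) * logb 2 (2 * π * Real.exp 1 * (Δ ^ 2 / 12 + p)) := by
  set V : ℝ≥0 := ⟨Δ ^ 2 / 12 + p, by positivity⟩
  have hV : V ≠ 0 := NNReal.coe_ne_zero.mp (by positivity : (0 : ℝ) < Δ ^ 2 / 12 + p).ne'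
  have hUL2 : MemLp U 2 P := memLp_of_bounded
    (ae_of_ae_map hU.aemeasurable (hunif ▸ ae_mem_Icc_uniformDitherMeasure))
    hU.aestronglyMeasurable 2
  have hXL2 : MemLp X 2 P := (memLp_two_iff_integrable_sq hX.aestronglyMeasurable).mpr hX2
  have hU1 : ∫ ω, U ω ∂P = 0 := by
    rw [← integral_map (f := fun u ↦ u) hU.aemeasurable aestronglyMeasurable_id, hunif,
      integral_id_uniformDitherMeasure hΔ]
  have hU2 : ∫ ω, U ω ^ 2 ∂P = Δ ^ 2 / 12 := by
    rw [← integral_map (f := fun u ↦ u ^ 2) hU.aemeasurable (by fun_prop), hunif,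
      integral_sq_uniformDitherMeasure hΔ]
  have hY : AEMeasurable (fun ω ↦ X ω + U ω) P := (hX.add hU).aemeasurable
  have : IsProbabilityMeasure (volume.withDensity fun y ↦ ENNReal.ofReal (f y)) :=
    hdens ▸ Measure.isProbabilityMeasure_map hY
  have hY2i : Integrable (fun y ↦ y ^ 2) (volume.withDensity fun y ↦ ENNReal.ofReal (f y)) := by
    rw [← hdens, integrable_map_measure (by fun_prop) hY]
    exact (hXL2.add hUL2).integrable_sq
  have hY2 : ∫ y, y ^ 2 ∂volume.withDensity (fun y ↦ ENNReal.ofReal (f y)) ≤ V := by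
    rw [← hdens, integral_map hY (by fun_prop), hindep.integral_add_sq hXL2 hUL2 hU1, hU2]
    change _ ≤ Δ ^ 2 / 12 + p
    linarith
  have hflogf : Integrable fun y ↦ f y * log (f y) := by
    simpa [logb, mul_div_assoc', (log_pos one_lt_two).ne'] using hint.mul_const (log 2)
  have key := neg_integral_mul_log_lt_of_withDensity_ne_gaussianReal hf hf0 hV hY2i hY2
    (hdens ▸ map_add_ne_gaussianReal hΔ hX.aemeasurable hU.aemeasurable hindep hunif 0 V) hflogf
  simp_rw [logb, mul_div_assoc', integral_div, ← neg_div]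
  exact div_lt_div_of_pos_right key (log_pos one_lt_two)
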